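/- arXiv:2512.16190 — 7 statements merged into one kernel-verified Lean document; each statement's English description precedes it below -/
import Mathlib

section
/- For any positive integer q, Σ_{n=0}^{q-1} c_q(n)^2 = q·φ(q). -/
open Finset Complex

noncomputable def ramanujanSum (q : ℕ) (n : ℤ) : ℂ :=
  ∑ k ∈ (Finset.Icc 1 q).filter (fun k => Nat.gcd k q = 1),
    Complex.exp (2 * (Real.pi : ℂ) * Complex.I * (k : ℂ) * (n : ℂ) / (q : ℂ))

/-!
With `ψ` the standard additive character of `ZMod q`, `c_q(n) = ∑_{u ∈ (ZMod q)ˣ} ψ(u n)`.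
Squaring and summing over `n ∈ ZMod q` gives `∑_{u, v} ∑_n ψ((u + v) n)`; by orthogonality the
inner sum is `q` when `v = -u` and `0` otherwise, leaving `q · #(ZMod q)ˣ = q φ(q)`.
-/

theorem Fintype.sum_units_eq_sum_isUnit {M β : Type*} [Monoid M] [Fintype M] [DecidableEq M]
    [DecidablePred (IsUnit : M → Prop)] [AddCommMonoid β] (f : M → β) :
    ∑ u : Mˣ, f u = ∑ x with IsUnit x, f x := by
  have : (univ : Finset M).filter IsUnit = univ.map ⟨Units.val, Units.val_injective⟩ := by
    ext x
    simp [IsUnit]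
  rw [this, sum_map]
  rfl

theorem AddChar.sum_sq_sum_units_eq_card_mul_card_units {R R' : Type*} [CommRing R] [Fintype R]
    [DecidableEq R] [CommRing R'] [IsDomain R'] {ψ : AddChar R R'} (hψ : ψ.IsPrimitive) :
    ∑ b : R, (∑ u : Rˣ, ψ (u * b)) ^ 2 = Fintype.card R * Fintype.card Rˣ := by
  have hortho (c : R) : ∑ b, ψ (c * b) = if c = 0 then (Fintype.card R : R') else 0 := by
    simpa only [mul_comm, apply_ite (Nat.cast : ℕ → R'), Nat.cast_zero] using
      AddChar.sum_mulShift c hψ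
  have hpair (u : Rˣ) : ∑ v : Rˣ, ∑ b : R, ψ (u * b) * ψ (v * b) = Fintype.card R := by
    simp_rw [← AddChar.map_add_eq_mul, ← add_mul, hortho, add_eq_zero_iff_neg_eq,
      ← Units.val_neg, Units.val_inj]
    exact (sum_ite_eq _ _ _).trans (if_pos (mem_univ _))
  simp_rw [sq, sum_mul_sum]
  rw [sum_comm, sum_congr rfl fun u _ => sum_comm.trans (hpair u)]
  simp [mul_comm]

namespace ZMod

variable {q : ℕ} [NeZero q] {M : Type*} [AddCommMonoid M]

theorem sum_natCast_eq_sum_univ {s : Finset ℕ} (hinj : Set.InjOn (Nat.cast : ℕ → ZMod q) s)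
    (hcard : #s = q) (f : ZMod q → M) : ∑ k ∈ s, f k = ∑ x, f x := by
  rw [← sum_image hinj]
  congr
  apply eq_univ_of_card
  rw [card_image_of_injOn hinj, hcard, ZMod.card]

theorem sum_range_natCast (f : ZMod q → M) : ∑ k ∈ range q, f k = ∑ x, f x :=
  sum_natCast_eq_sum_univ
    (fun a ha b hb h => ((natCast_eq_natCast_iff a b q).mp h).eq_of_lt_of_lt
      (mem_range.mp ha) (mem_range.mp hb))
    (card_range q) f

theorem sum_Icc_natCast (f : ZMod q → M) : ∑ k ∈ Icc 1 q, f k = ∑ x, f x := by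
  refine sum_natCast_eq_sum_univ
    (fun a ha b hb h => ((natCast_eq_natCast_iff a b q).mp h).eq_of_abs_lt ?_) (by simp) f
  simp only [coe_Icc, Set.mem_Icc] at ha hb
  rw [abs_sub_lt_iff]
  omega

end ZMod

theorem ramanujanSum_eq_sum_units (q : ℕ) [NeZero q] (n : ℤ) :
    ramanujanSum q n = ∑ u : (ZMod q)ˣ, ZMod.stdAddChar ((u : ZMod q) * (n : ZMod q)) := by
  rw [Fintype.sum_units_eq_sum_isUnit (fun x : ZMod q => ZMod.stdAddChar (x * (n : ZMod q))),
    ramanujanSum, sum_filter, sum_filter, ← ZMod.sum_Icc_natCast]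
  refine sum_congr rfl fun k _ => if_congr (ZMod.isUnit_iff_coprime k q).symm ?_ rfl
  rw [← Int.cast_natCast (R := ZMod q), ← Int.cast_mul, ZMod.stdAddChar_coe]
  congr 1
  push_cast
  ring

theorem ramanujanSum_sum_sq (q : ℕ) (hq : 0 < q) :
    ∑ n ∈ Finset.range q, (ramanujanSum q (n : ℤ)) ^ 2 =
      (q : ℂ) * (Nat.totient q : ℂ) := by
  have : NeZero q := ⟨hq.ne'⟩
  simp_rw [ramanujanSum_eq_sum_units, Int.cast_natCast]
  rw [ZMod.sum_range_natCast (fun x => (∑ u : (ZMod q)ˣ, ZMod.stdAddChar ((u : ZMod q) * x)) ^ 2),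
    AddChar.sum_sq_sum_units_eq_card_mul_card_units (ZMod.isPrimitive_stdAddChar q), ZMod.card,
    ZMod.card_units_eq_totient]
end

section
/- (Orthogonality of Ramanujan sums) For distinct positive integers q ≠ q' and any integer l, Σ_{n=0}^{L−1} c_{q'}(n)·c_q(n−l) = 0, where L = lcm(q, q'). -/
open Finset Complex

/-!
Expanding both Ramanujan sums, the sum becomes a combination of sums
`∑_{n < L} ζ^n ξ^(n-l)` with `ζ` a primitive `q'`-th and `ξ` a primitive `q`-th root of unity.
Since `q ≠ q'`, `ζξ ≠ 1`, while `(ζξ)^L = 1`; so each of these geometric sums vanishes.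
-/

theorem geom_sum_eq_zero_of_pow_eq_one {K : Type*} [DivisionRing K] {z : K} {n : ℕ}
    (hz : z ≠ 1) (hn : z ^ n = 1) : ∑ i ∈ range n, z ^ i = 0 := by
  rw [geom_sum_eq hz, hn, sub_self, zero_div]

namespace IsPrimitiveRoot

variable {K : Type*} [Field K] {ζ ξ : K} {a b : ℕ}

theorem mul_ne_one_of_ne (hζ : IsPrimitiveRoot ζ a) (hξ : IsPrimitiveRoot ξ b) (hab : a ≠ b) :
    ζ * ξ ≠ 1 := fun h =>
  hab (hζ.unique (eq_inv_of_mul_eq_one_left h ▸ hξ.inv))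

theorem mul_pow_lcm_eq_one (hζ : IsPrimitiveRoot ζ a) (hξ : IsPrimitiveRoot ξ b) :
    (ζ * ξ) ^ a.lcm b = 1 := by
  rw [mul_pow, hζ.pow_eq_one_iff_dvd _ |>.2 (Nat.dvd_lcm_left a b),
    hξ.pow_eq_one_iff_dvd _ |>.2 (Nat.dvd_lcm_right a b), one_mul]

theorem sum_range_lcm_zpow_mul_zpow_sub_eq_zero (hζ : IsPrimitiveRoot ζ a)
    (hξ : IsPrimitiveRoot ξ b) (hb : b ≠ 0) (hab : a ≠ b) (l : ℤ) :
    ∑ n ∈ range (a.lcm b), ζ ^ (n : ℤ) * ξ ^ ((n : ℤ) - l) = 0 := by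
  have hξ0 : ξ ≠ 0 := hξ.ne_zero hb
  calc ∑ n ∈ range (a.lcm b), ζ ^ (n : ℤ) * ξ ^ ((n : ℤ) - l)
      = (∑ n ∈ range (a.lcm b), (ζ * ξ) ^ n) * ξ ^ (-l) := by
        rw [sum_mul]
        refine sum_congr rfl fun n _ => ?_
        rw [zpow_sub₀ hξ0, zpow_neg, zpow_natCast, zpow_natCast, mul_pow, div_eq_mul_inv,
          mul_assoc]
    _ = 0 := by
        rw [geom_sum_eq_zero_of_pow_eq_one (hζ.mul_ne_one_of_ne hξ hab)
          (hζ.mul_pow_lcm_eq_one hξ), zero_mul]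

end IsPrimitiveRoot

theorem ramanujanSum_eq_sum_zpow (q : ℕ) (n : ℤ) :
    ramanujanSum q n = ∑ k ∈ (Icc 1 q).filter (fun k => k.Coprime q),
      exp (2 * Real.pi * I * (k / q)) ^ n := by
  refine sum_congr rfl fun k _ => ?_
  rw [← exp_int_mul]
  ring_nf

theorem ramanujanSum_orthogonality_general (q q' : ℕ)
    (hne : q ≠ q') (l : ℤ) :
    ∑ n ∈ Finset.range (Nat.lcm q q'),
      ramanujanSum q' (n : ℤ) * ramanujanSum q ((n : ℤ) - l) = 0 := by
  simp only [ramanujanSum_eq_sum_zpow, sum_mul_sum]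
  rw [sum_comm]
  refine sum_eq_zero fun k hk => ?_
  rw [sum_comm]
  refine sum_eq_zero fun j hj => ?_
  simp only [mem_filter, mem_Icc] at hk hj
  have hk' := isPrimitiveRoot_exp_of_coprime k q' (by omega) hk.2
  have hj' := isPrimitiveRoot_exp_of_coprime j q (by omega) hj.2
  rw [Nat.lcm_comm]
  exact hk'.sum_range_lcm_zpow_mul_zpow_sub_eq_zero hj' (by omega) (Ne.symm hne) l

theorem ramanujanSum_orthogonality (q q' : ℕ) (hq : 0 < q) (hq' : 0 < q')
    (hne : q ≠ q') (l : ℤ) :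
    ∑ n ∈ Finset.range (Nat.lcm q q'),
      ramanujanSum q' (n : ℤ) * ramanujanSum q ((n : ℤ) - l) = 0 :=
  ramanujanSum_orthogonality_general q q' hne l
end

section
/- Let N be a positive integer, q a divisor of N, and m ∈ {0,1,…,N−1}. Then Σ_{n=0}^{N−1} c_q(n)·e^{−2πimn/N} equals N if m = kN/q for some integer k with gcd(k,q) = 1, and equals 0 otherwise. -/
/-! Expanding `c_q` and swapping the sums, the sum over `n` is a complete geometric sum of an
`N`-th root of unity: writing `N = q d`, the `k`-th term contributes `N` if `N ∣ k d - m` and `0`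
otherwise. After reindexing `c_q` over the residues `0 ≤ k < q`, that divisibility forces
`k d = m`, which holds for at most one `k`. -/

open Finset Complex

theorem sum_range_exp_two_pi_I_mul_div (N : ℕ) (a : ℤ) :
    ∑ n ∈ range N, exp (2 * Real.pi * I * a * n / N) =
      if (N : ℤ) ∣ a then (N : ℂ) else 0 := by
  obtain rfl | hN := eq_or_ne N 0
  · simp
  set ζ := exp (2 * Real.pi * I / N)
  have hζ : IsPrimitiveRoot ζ N := isPrimitiveRoot_exp N hN
  have hpow (n : ℕ) : exp (2 * Real.pi * I * a * n / N) = (ζ ^ a) ^ n := by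
    rw [← zpow_natCast, ← zpow_mul, ← exp_int_mul]
    push_cast
    ring_nf
  simp_rw [hpow, ← hζ.zpow_eq_one_iff_dvd]
  split_ifs with h
  · simp [h]
  · rw [geom_sum_eq h, ← zpow_natCast, ← zpow_mul, mul_comm a, zpow_mul, zpow_natCast,
      hζ.pow_eq_one, one_zpow, sub_self, zero_div]

theorem Finset.sum_Icc_one_eq_sum_range {M : Type*} [AddCommMonoid M] (f : ℕ → M) (q : ℕ)
    (h : f q = f 0) : ∑ k ∈ Icc 1 q, f k = ∑ k ∈ range q, f k := by
  obtain _ | p := q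
  · rfl
  rw [← Ico_add_one_right_eq_Icc, ← sum_Ico_add' f 0 (p + 1) 1, ← range_eq_Ico,
    sum_range_succ, sum_range_succ', h]

theorem ramanujanSum_eq_sum_range (q : ℕ) (n : ℤ) :
    ramanujanSum q n =
      ∑ k ∈ (range q).filter (fun k => Nat.gcd k q = 1), exp (2 * Real.pi * I * k * n / q) := by
  rw [ramanujanSum, sum_filter, sum_filter]
  refine sum_Icc_one_eq_sum_range _ q ?_
  simp only [Nat.gcd_self, Nat.gcd_zero_left]
  split_ifs with hq
  · subst hq
    simpa [mul_comm] using exp_int_mul_two_pi_mul_I n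
  · rfl

theorem Int.natCast_mul_dvd_sub_iff_eq {q d k m : ℕ} (hk : k < q) (hm : m < q * d) :
    ((q * d : ℕ) : ℤ) ∣ k * d - m ↔ k * d = m := by
  refine ⟨fun h => ?_, fun h => by subst h; push_cast; simp⟩
  have hkd : k * d < q * d := by nlinarith
  have := Int.eq_zero_of_abs_lt_dvd h (abs_sub_lt_iff.2 ⟨by omega, by omega⟩)
  omega

theorem mem_image_mul_filter_coprime_iff {q d m : ℕ} (hm : m < q * d) :
    m ∈ ((range q).filter (fun k => Nat.gcd k q = 1)).image (· * d) ↔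
      ∃ k : ℕ, Nat.gcd k q = 1 ∧ m * q = k * (q * d) := by
  simp only [mem_image, mem_filter, mem_range]
  constructor
  · rintro ⟨k, ⟨-, hk⟩, rfl⟩
    exact ⟨k, hk, by ring⟩
  · rintro ⟨k, hk, h⟩
    have hq : 0 < q := Nat.pos_of_mul_pos_right (by omega : 0 < q * d)
    have hkd : k * d = m := Nat.eq_of_mul_eq_mul_left hq (by rw [mul_comm q m, h]; ring)
    exact ⟨k, ⟨Nat.lt_of_mul_lt_mul_right (hkd ▸ hm), hk⟩, hkd⟩

open scoped Classical in
theorem ramanujanSum_dft_general (N q : ℕ) (hq : q ∣ N)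
    (m : ℕ) (hm : m < N) :
    ∑ n ∈ Finset.range N,
      ramanujanSum q (n : ℤ) *
        Complex.exp (-(2 * (Real.pi : ℂ) * Complex.I * (m : ℂ) * (n : ℂ) / (N : ℂ))) =
    if ∃ k : ℕ, Nat.gcd k q = 1 ∧ m * q = k * N then (N : ℂ) else 0 := by
  obtain ⟨d, rfl⟩ := hq
  have hd0 : d ≠ 0 := by rintro rfl; simp at hm
  have hexp (k n : ℕ) : exp (2 * Real.pi * I * k * n / q) *
      exp (-(2 * Real.pi * I * m * n / (q * d : ℕ))) =
      exp (2 * Real.pi * I * ((k * d - m : ℤ) : ℂ) * n / (q * d : ℕ)) := by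
    rw [← exp_add]
    congr 1
    push_cast
    field_simp
    ring
  set S := (range q).filter (fun k => Nat.gcd k q = 1)
  calc _ = ∑ k ∈ S, ∑ n ∈ range (q * d),
          exp (2 * Real.pi * I * ((k * d - m : ℤ) : ℂ) * n / (q * d : ℕ)) := by
        simp_rw [ramanujanSum_eq_sum_range, Int.cast_natCast, sum_mul, hexp]
        exact sum_comm
    _ = ∑ k ∈ S, if k * d = m then ((q * d : ℕ) : ℂ) else 0 := by
        refine sum_congr rfl fun k hk => ?_
        have hkq : k < q := mem_range.1 (mem_filter.1 hk).1
        rw [sum_range_exp_two_pi_I_mul_div,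
          if_congr (Int.natCast_mul_dvd_sub_iff_eq hkq hm) rfl rfl]
    _ = ∑ j ∈ S.image (· * d), if j = m then ((q * d : ℕ) : ℂ) else 0 := by
        rw [sum_image fun _ _ _ _ h => Nat.eq_of_mul_eq_mul_right (Nat.pos_of_ne_zero hd0) h]
    _ = _ := by
        rw [sum_ite_eq', if_congr (mem_image_mul_filter_coprime_iff hm) rfl rfl]

open scoped Classical in
theorem ramanujanSum_dft (N q : ℕ) (hN : 0 < N) (hq : q ∣ N) (hq0 : 0 < q)
    (m : ℕ) (hm : m < N) :
    ∑ n ∈ Finset.range N,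
      ramanujanSum q (n : ℤ) *
        Complex.exp (-(2 * (Real.pi : ℂ) * Complex.I * (m : ℂ) * (n : ℂ) / (N : ℂ))) =
    if ∃ k : ℕ, Nat.gcd k q = 1 ∧ m * q = k * N then (N : ℂ) else 0 :=
  ramanujanSum_dft_general N q hq m hm
end

section
/- Let N = 2d with d odd, let q be an even divisor of N, and let n be any integer. Then c_{q/2}(n) = (−1)^n · c_q(n). -/
open Finset Complex

/-!
For odd `m`, the map `k ↦ 2k + m (mod 2m)` is a bijection from the reduced residues modulo `m`
onto those modulo `2m`, and it multiplies each term `e(kn/m)` of `c_m(n)` by `e(n/2) = (-1)^n`.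
Hence `c_{2m}(n) = (-1)^n c_m(n)`, and `q / 2` is odd because it divides `d`.
-/

open scoped Real

def reducedResidues (q : ℕ) : Finset ℕ :=
  (Icc 1 q).filter (fun k => Nat.gcd k q = 1)

lemma mem_reducedResidues {q k : ℕ} :
    k ∈ reducedResidues q ↔ (1 ≤ k ∧ k ≤ q) ∧ k.Coprime q := by
  rw [reducedResidues, mem_filter, mem_Icc, Nat.Coprime]

lemma ramanujanSum_eq_sum_reducedResidues (q : ℕ) (n : ℤ) :
    ramanujanSum q n = ∑ k ∈ reducedResidues q, exp (2 * π * I * k * n / q) :=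
  rfl

lemma exp_two_pi_I_mul_div_eq_of_modEq {q a b : ℕ} (h : a ≡ b [MOD q]) (n : ℤ) :
    exp (2 * π * I * a * n / q) = exp (2 * π * I * b * n / q) := by
  rcases eq_or_ne q 0 with rfl | hq
  · rw [Nat.modEq_zero_iff.mp h]
  obtain ⟨t, ht⟩ := Nat.modEq_iff_dvd.mp h
  have hb : (b : ℂ) = a + q * t := by
    rw [← sub_eq_iff_eq_add']
    exact_mod_cast ht
  refine exp_eq_exp_iff_exists_int.mpr ⟨-(t * n), ?_⟩
  rw [hb]
  push_cast
  field_simp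
  ring

lemma exp_two_pi_I_mul_two_mul_add_div {m : ℕ} (hm : m ≠ 0) (k : ℕ) (n : ℤ) :
    exp (2 * π * I * ↑(2 * k + m) * n / ↑(2 * m)) =
      (-1) ^ n * exp (2 * π * I * k * n / m) := by
  rw [← exp_pi_mul_I, ← exp_int_mul, ← exp_add]
  congr 1
  push_cast
  field_simp
  ring

lemma odd_of_mem_reducedResidues_two_mul {m a : ℕ} (ha : a ∈ reducedResidues (2 * m)) : Odd a :=
  Nat.coprime_two_left.mp (Nat.Coprime.coprime_dvd_left (dvd_mul_right 2 m)
    (mem_reducedResidues.mp ha).2.symm)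

section Shift

variable {m k a : ℕ}

def shiftDouble (m k : ℕ) : ℕ :=
  if m < 2 * k then 2 * k - m else 2 * k + m

def shiftHalf (m a : ℕ) : ℕ :=
  if a ≤ m then (a + m) / 2 else (a - m) / 2

lemma shiftDouble_modEq (m k : ℕ) : shiftDouble m k ≡ 2 * k + m [MOD 2 * m] := by
  unfold shiftDouble
  split_ifs
  · exact (Nat.modEq_iff_dvd' (by omega)).mpr ⟨1, by omega⟩
  · rfl

lemma two_mul_shiftHalf_modEq (ha : Odd a) (hm : Odd m) :
    2 * shiftHalf m a ≡ a + m [MOD 2 * m] := by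
  unfold shiftHalf
  split_ifs
  · rw [Nat.two_mul_div_two_of_even (ha.add_odd hm)]
  · rw [Nat.two_mul_div_two_of_even (Nat.Odd.sub_odd ha hm)]
    exact (Nat.modEq_iff_dvd' (by omega)).mpr ⟨1, by omega⟩

lemma shiftDouble_mem_reducedResidues (hm : Odd m) (hk : k ∈ reducedResidues m) :
    shiftDouble m k ∈ reducedResidues (2 * m) := by
  obtain ⟨⟨hk₁, hkm⟩, hcop⟩ := mem_reducedResidues.mp hk
  refine mem_reducedResidues.mpr ⟨by unfold shiftDouble; split_ifs <;> omega, ?_⟩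
  rw [Nat.Coprime, (shiftDouble_modEq m k).gcd_eq, ← Nat.Coprime, Nat.coprime_mul_iff_right]
  refine ⟨Nat.coprime_comm.mp (Nat.coprime_two_left.mpr ?_),
    Nat.coprime_add_self_left.mpr ((Nat.coprime_two_left.mpr hm).mul_left hcop)⟩
  exact (even_two_mul k).add_odd hm

lemma shiftHalf_mem_reducedResidues (hm : Odd m) (ha : a ∈ reducedResidues (2 * m)) :
    shiftHalf m a ∈ reducedResidues m := by
  obtain ⟨⟨ha₁, ham⟩, hcop⟩ := mem_reducedResidues.mp ha
  have hodd := odd_of_mem_reducedResidues_two_mul ha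
  refine mem_reducedResidues.mpr ⟨?_, ?_⟩
  · obtain ⟨a, rfl⟩ := hodd
    obtain ⟨m, rfl⟩ := hm
    unfold shiftHalf
    split_ifs <;> omega
  · refine Nat.Coprime.coprime_mul_left (k := 2) ?_
    rw [Nat.Coprime, ((two_mul_shiftHalf_modEq hodd hm).of_mul_left 2).gcd_eq, ← Nat.Coprime]
    exact Nat.coprime_add_self_left.mpr (hcop.coprime_dvd_right (dvd_mul_left m 2))

lemma shiftHalf_shiftDouble (hk : k ∈ reducedResidues m) : shiftHalf m (shiftDouble m k) = k := by
  obtain ⟨⟨hk₁, hkm⟩, -⟩ := mem_reducedResidues.mp hk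
  unfold shiftDouble shiftHalf
  split_ifs <;> omega

lemma shiftDouble_shiftHalf (hm : Odd m) (ha : a ∈ reducedResidues (2 * m)) :
    shiftDouble m (shiftHalf m a) = a := by
  obtain ⟨⟨ha₁, ham⟩, -⟩ := mem_reducedResidues.mp ha
  obtain ⟨a, rfl⟩ := odd_of_mem_reducedResidues_two_mul ha
  obtain ⟨m, rfl⟩ := hm
  unfold shiftDouble shiftHalf
  split_ifs <;> omega

end Shift

theorem ramanujanSum_two_mul_of_odd {m : ℕ} (hm : Odd m) (n : ℤ) :
    ramanujanSum (2 * m) n = (-1) ^ n * ramanujanSum m n := by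
  rw [ramanujanSum_eq_sum_reducedResidues, ramanujanSum_eq_sum_reducedResidues, mul_sum]
  symm
  refine sum_nbij' (shiftDouble m) (shiftHalf m) (fun _ => shiftDouble_mem_reducedResidues hm)
    (fun _ => shiftHalf_mem_reducedResidues hm) (fun _ => shiftHalf_shiftDouble)
    (fun _ => shiftDouble_shiftHalf hm) (fun k _ => ?_)
  rw [exp_two_pi_I_mul_div_eq_of_modEq (shiftDouble_modEq m k),
    exp_two_pi_I_mul_two_mul_add_div hm.pos.ne']

theorem ramanujanSum_half (N d q : ℕ) (hN : N = 2 * d) (hd : Odd d)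
    (hq : q ∣ N) (hqeven : 2 ∣ q) (n : ℤ) :
    ramanujanSum (q / 2) n = (-1 : ℂ) ^ n * ramanujanSum q n := by
  obtain ⟨m, rfl⟩ := hqeven
  have hm : Odd m := hd.of_dvd_nat (Nat.dvd_of_mul_dvd_mul_left two_pos (hN ▸ hq))
  rw [Nat.mul_div_cancel_left m two_pos, ramanujanSum_two_mul_of_odd hm n, ← mul_assoc,
    ← mul_zpow, neg_one_mul, neg_neg, one_zpow, one_mul]
end

section
/- Let N = 2d with d odd, let q be a divisor of N, let m ∈ {1,…,N−1} with m = kN/q for some k coprime to q, and let n be any integer. Then c_q(N/2 + n)·e^{−2πim(N/2+n)/N} = c_q(n)·e^{−2πimn/N}. -/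
/-!
Since `m/N = k/q`, the twist is `e(-kx/q)`. Summand `l` of `c_q(d + n) e(-k(d + n)/q)` is summand `l`
of `c_q(n) e(-kn/q)` times `e(d(l - k)/q)`, and this factor is `1`: `q ∣ 2d`, and when `q` is even
both `l` and `k` are odd, being prime to `q`.
-/

open Finset Complex

open Real

theorem Int.dvd_mul_sub_of_dvd_two_mul {q d a b : ℤ} (hq : q ∣ 2 * d) (ha : IsCoprime a q)
    (hb : IsCoprime b q) : q ∣ d * (a - b) := by
  rcases Int.even_or_odd q with hq_even | hq_odd
  · have h2q : 2 ∣ q := hq_even.two_dvd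
    have hab : Even (a - b) :=
      (Int.isCoprime_two_right.mp (ha.of_isCoprime_of_dvd_right h2q)).sub_odd
        (Int.isCoprime_two_right.mp (hb.of_isCoprime_of_dvd_right h2q))
    obtain ⟨c, hc⟩ := hab.two_dvd
    exact hq.trans ⟨c, by rw [hc]; ring⟩
  · exact ((Int.isCoprime_two_left.mpr hq_odd).symm.dvd_of_dvd_mul_left hq).mul_right _

theorem exp_two_pi_I_mul_div_eq_one_of_dvd {q a : ℤ} (hq : q ≠ 0) (h : q ∣ a) :
    exp (2 * π * I * a / q) = 1 := by
  obtain ⟨c, rfl⟩ := h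
  rw [← exp_int_mul_two_pi_mul_I c]
  congr 1
  push_cast
  field_simp

theorem ramanujanSum_add_mul_exp_eq {q : ℕ} {d k : ℤ} (hq : q ≠ 0) (hd : (q : ℤ) ∣ 2 * d)
    (hk : IsCoprime k q) (n : ℤ) :
    ramanujanSum q (d + n) * exp (-(2 * π * I * k * (d + n) / q)) =
      ramanujanSum q n * exp (-(2 * π * I * k * n / q)) := by
  rw [ramanujanSum, ramanujanSum, sum_mul, sum_mul]
  refine sum_congr rfl fun l hl => ?_
  have hl : IsCoprime (l : ℤ) q := Nat.isCoprime_iff_coprime.mpr (mem_filter.mp hl).2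
  have hshift := exp_two_pi_I_mul_div_eq_one_of_dvd (Int.natCast_ne_zero.mpr hq)
    (Int.dvd_mul_sub_of_dvd_two_mul hd hl hk)
  rw [← Complex.exp_add, ← Complex.exp_add]
  conv_rhs => rw [← mul_one (cexp _), ← hshift, ← Complex.exp_add]
  congr 1
  push_cast
  field_simp
  ring

theorem ramanujanSum_half_period_shift_general (N d q k m : ℕ) (hN : N = 2 * d)
    (hd : Odd d) (hq : q ∣ N) (hq0 : 0 < q) (hk : Nat.gcd k q = 1)
    (hm : m * q = k * N) (n : ℤ) :
    ramanujanSum q ((d : ℤ) + n) *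
        Complex.exp (-(2 * (Real.pi : ℂ) * Complex.I * (m : ℂ) * ((d : ℂ) + (n : ℂ)) / (N : ℂ))) =
      ramanujanSum q n *
        Complex.exp (-(2 * (Real.pi : ℂ) * Complex.I * (m : ℂ) * (n : ℂ) / (N : ℂ))) := by
  have hNC : (N : ℂ) ≠ 0 := by exact_mod_cast hN ▸ (Nat.mul_pos two_pos hd.pos).ne'
  have hqC : (q : ℂ) ≠ 0 := by exact_mod_cast hq0.ne'
  have hmN (x : ℂ) : 2 * π * I * m * x / N = 2 * π * I * (k : ℤ) * x / q := by
    have hmC : (m : ℂ) * q = k * N := by exact_mod_cast hm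
    push_cast
    field_simp
    linear_combination x * hmC
  have hdZ : (q : ℤ) ∣ 2 * d := by exact_mod_cast hN ▸ hq
  rw [hmN, hmN]
  exact_mod_cast ramanujanSum_add_mul_exp_eq hq0.ne' hdZ (Nat.isCoprime_iff_coprime.mpr hk) n

theorem ramanujanSum_half_period_shift (N d q k m : ℕ) (hN : N = 2 * d)
    (hd : Odd d) (hq : q ∣ N) (hq0 : 0 < q) (hk : Nat.gcd k q = 1)
    (hm : m * q = k * N) (h1 : 1 ≤ m) (h2 : m ≤ N - 1) (n : ℤ) :
    ramanujanSum q ((d : ℤ) + n) *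
        Complex.exp (-(2 * (Real.pi : ℂ) * Complex.I * (m : ℂ) * ((d : ℂ) + (n : ℂ)) / (N : ℂ))) =
      ramanujanSum q n *
        Complex.exp (-(2 * (Real.pi : ℂ) * Complex.I * (m : ℂ) * (n : ℂ) / (N : ℂ))) :=
  ramanujanSum_half_period_shift_general N d q k m hN hd hq hq0 hk hm n
end

section
/- Let N = 2d with d odd, and let q, q' be divisors of N with q' ∉ {q, q/2, 2q}. Then for any integer k coprime to q and any n ∈ {0,1}, Σ_{ℓ=0}^{d−1} c_{q'}(2ℓ+n)·e^{−2πi(2ℓ)k/q} = 0. -/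
open Finset Complex

open Real

/-!
Write `e(x) = exp(2πix)`. Expanding `c_{q'}` and swapping the sums, the `j`-th term is `e(jn/q')`
times a geometric sum over `ℓ < d` with ratio `z = e(2(jq - kq')/(qq'))`. Since `q, q' ∣ 2d`,
`z ^ d = 1`; and `z = 1` would force `q ∣ 2q'` and `q' ∣ 2q` (by the coprimality of `k` with `q`
and of `j` with `q'`), i.e. `q' ∈ {q, q/2, 2q}`. So every geometric sum vanishes.
-/

theorem Complex.sum_range_exp_eq_zero {a m : ℤ} {d : ℕ} (hd : m ∣ d * a) (ha : ¬ m ∣ a) :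
    ∑ ℓ ∈ range d, exp (2 * π * I * a * ℓ / m) = 0 := by
  rcases eq_or_ne m 0 with rfl | hm
  · obtain rfl : d = 0 := by simp_all
    simp
  have hmC : (m : ℂ) ≠ 0 := by exact_mod_cast hm
  set z := exp (2 * π * I * a / m)
  have hpow : ∀ ℓ : ℕ, exp (2 * π * I * a * ℓ / m) = z ^ ℓ := fun ℓ => by
    rw [← exp_nat_mul]
    ring_nf
  have hzd : z ^ d = 1 := by
    obtain ⟨c, hc⟩ := hd
    rw [← hpow, exp_eq_one_iff]
    refine ⟨c, ?_⟩
    field_simp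
    exact_mod_cast (mul_comm _ _).trans hc
  have hz1 : z ≠ 1 := by
    rw [Ne, exp_eq_one_iff]
    rintro ⟨c, hc⟩
    refine ha ⟨c, ?_⟩
    field_simp at hc
    exact_mod_cast hc
  simp only [hpow]
  rw [geom_sum_eq hz1, hzd, sub_self, zero_div]

theorem Nat.eq_or_two_mul_eq_or_eq_two_mul_of_dvd_two_mul {a b : ℕ} (hab : a ∣ 2 * b)
    (hba : b ∣ 2 * a) : b = a ∨ 2 * b = a ∨ b = 2 * a := by
  obtain ⟨u, hu⟩ := hab
  obtain ⟨v, hv⟩ := hba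
  rcases Nat.eq_zero_or_pos a with rfl | ha
  · left; omega
  rcases Nat.eq_zero_or_pos b with rfl | hb
  · left; omega
  have huv : u * v = 4 := by
    refine Nat.eq_of_mul_eq_mul_left (Nat.mul_pos ha hb) ?_
    calc a * b * (u * v) = (a * u) * (b * v) := by ring
      _ = a * b * 4 := by rw [← hu, ← hv]; ring
  have hu4 : u ≤ 4 := Nat.le_of_dvd (by norm_num) ⟨v, huv.symm⟩
  interval_cases u <;> omega

theorem Int.dvd_two_mul_of_dvd_two_mul_sub {q q' j k : ℤ} (hk : IsCoprime k q)
    (h : q ∣ 2 * (j * q - k * q')) : q ∣ 2 * q' := by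
  refine hk.symm.dvd_of_dvd_mul_left ?_
  have := (dvd_mul_left q (2 * j)).sub h
  rwa [show 2 * j * q - 2 * (j * q - k * q') = k * (2 * q') by ring] at this

theorem Int.not_mul_dvd_two_mul_sub {q q' j k : ℕ} (hk : k.Coprime q) (hj : j.Coprime q')
    (h1 : q' ≠ q) (h2 : 2 * q' ≠ q) (h3 : q' ≠ 2 * q) :
    ¬ ((q * q' : ℤ) ∣ 2 * (j * q - k * q')) := by
  intro h
  have hq : (q : ℤ) ∣ 2 * q' :=
    dvd_two_mul_of_dvd_two_mul_sub (Nat.isCoprime_iff_coprime.mpr hk)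
      ((dvd_mul_right _ _).trans h)
  have hq' : (q' : ℤ) ∣ 2 * q := by
    refine dvd_two_mul_of_dvd_two_mul_sub (j := k) (Nat.isCoprime_iff_coprime.mpr hj) ?_
    rw [show 2 * ((k : ℤ) * q' - j * q) = -(2 * (j * q - k * q')) by ring, dvd_neg]
    exact (dvd_mul_left _ _).trans h
  rcases Nat.eq_or_two_mul_eq_or_eq_two_mul_of_dvd_two_mul (by exact_mod_cast hq)
    (by exact_mod_cast hq') with h | h | h <;> contradiction

theorem zak_vanishing_general (N d q q' k : ℕ) (hN : N = 2 * d)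
    (hq : q ∣ N) (hq' : q' ∣ N) (hq0 : 0 < q)
    (h1 : q' ≠ q) (h2 : 2 * q' ≠ q) (h3 : q' ≠ 2 * q)
    (hk : Nat.gcd k q = 1) (n : ℕ) :
    ∑ ℓ ∈ Finset.range d,
      ramanujanSum q' ((2 * ℓ + n : ℕ) : ℤ) *
        Complex.exp (-(2 * (Real.pi : ℂ) * Complex.I * ((2 * ℓ : ℕ) : ℂ) * (k : ℂ) / (q : ℂ))) = 0 := by
  simp only [ramanujanSum, sum_mul]
  rw [sum_comm]
  refine sum_eq_zero fun j hj => ?_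
  obtain ⟨hjq', hj⟩ := mem_filter.mp hj
  have hqC : (q : ℂ) ≠ 0 := by exact_mod_cast hq0.ne'
  have hq'C : (q' : ℂ) ≠ 0 := by
    have := mem_Icc.mp hjq'
    exact_mod_cast (by omega : q' ≠ 0)
  have hfactor : ∀ ℓ : ℕ,
      exp (2 * π * I * j * ((2 * ℓ + n : ℕ) : ℤ) / q') * exp (-(2 * π * I * (2 * ℓ : ℕ) * k / q)) =
        exp (2 * π * I * j * n / q') *
          exp (2 * π * I * ((2 * (j * q - k * q') : ℤ) : ℂ) * ℓ / ((q * q' : ℤ) : ℂ)) := fun ℓ => by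
    rw [← Complex.exp_add, ← Complex.exp_add]
    congr 1
    push_cast
    field_simp
    ring
  simp_rw [hfactor]
  rw [← mul_sum, sum_range_exp_eq_zero, mul_zero]
  · obtain ⟨s, hs⟩ := hq
    obtain ⟨t, ht⟩ := hq'
    refine ⟨j * t - k * s, ?_⟩
    have hs' : (2 * d : ℤ) = q * s := by exact_mod_cast hN ▸ hs
    have ht' : (2 * d : ℤ) = q' * t := by exact_mod_cast hN ▸ ht
    linear_combination (j * q : ℤ) * ht' - (k * q' : ℤ) * hs'
  · exact Int.not_mul_dvd_two_mul_sub hk hj h1 h2 h3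

theorem zak_vanishing (N d q q' k : ℕ) (hN : N = 2 * d) (hd : Odd d)
    (hq : q ∣ N) (hq' : q' ∣ N) (hq0 : 0 < q)
    (h1 : q' ≠ q) (h2 : 2 * q' ≠ q) (h3 : q' ≠ 2 * q)
    (hk : Nat.gcd k q = 1) (n : ℕ) (hn : n = 0 ∨ n = 1) :
    ∑ ℓ ∈ Finset.range d,
      ramanujanSum q' ((2 * ℓ + n : ℕ) : ℤ) *
        Complex.exp (-(2 * (Real.pi : ℂ) * Complex.I * ((2 * ℓ : ℕ) : ℂ) * (k : ℂ) / (q : ℂ))) = 0 :=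
  zak_vanishing_general N d q q' k hN hq hq' hq0 h1 h2 h3 hk n
end

section
/- Let N = 2d with d even (so 4 | N), and let q_1, …, q_K be all divisors of N. Then for every divisor q of N, Σ_{ℓ=0}^{d−1} c_q(2ℓ+1)·e^{−2πiℓ/d} = 0; that is, the Zak transform values Zc_q(1,1) all vanish. Consequently the system {L_{2k} c_{q_i} : 0 ≤ k ≤ d−1, 1 ≤ i ≤ K} does not span ℓ²(Z_N) and hence is not a frame. -/
open Finset Complex

/-!
Write `q r = 2d`. If `r` is odd then `4 ∣ q`, and pairing `k` with `k + q/2` among the residues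
prime to `q` shows that `c_q` vanishes at odd arguments. If `r` is even then `q ∣ d`, so
`ℓ ↦ c_q(2ℓ + a) e^{-2πiℓ/d}` changes sign under `ℓ ↦ ℓ + d/2` and its sum over a full period
vanishes. Both arguments work for every odd offset `a`, so the linear functional `x ↦ Zx(1,1)`
kills every even translate `L_{2k} c_q`, while it does not vanish on the unit vector `δ_1`.
-/

open scoped Real

lemma ramanujanSum_periodic (q : ℕ) : Function.Periodic (ramanujanSum q) q := by
  intro n
  rcases eq_or_ne q 0 with rfl | hq
  · simp [ramanujanSum]
  refine sum_congr rfl fun k _ => ?_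
  have hq' : (q : ℂ) ≠ 0 := by exact_mod_cast hq
  rw [show 2 * π * I * k * ((n + q : ℤ) : ℂ) / q = 2 * π * I * k * n / q + k * (2 * π * I) by
    push_cast; field_simp, exp_add, exp_nat_mul_two_pi_mul_I, mul_one]

lemma Nat.coprime_add_self_two_mul_iff {k h : ℕ} (hh : Even h) :
    Nat.Coprime (k + h) (2 * h) ↔ Nat.Coprime k (2 * h) := by
  simp [Nat.coprime_mul_iff_right, Nat.coprime_add_self_left, Nat.odd_add, hh]

lemma ramanujanSum_two_mul_eq_zero {h : ℕ} (hh : Even h) {n : ℤ} (hn : Odd n) :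
    ramanujanSum (2 * h) n = 0 := by
  rcases eq_or_ne h 0 with rfl | h0
  · simp [ramanujanSum]
  have hterm (k : ℕ) : exp (2 * π * I * ((k + h : ℕ) : ℂ) * n / ((2 * h : ℕ) : ℂ)) =
      -exp (2 * π * I * k * n / ((2 * h : ℕ) : ℂ)) := by
    obtain ⟨j, rfl⟩ := hn
    have h' : (h : ℂ) ≠ 0 := by exact_mod_cast h0
    rw [show 2 * π * I * ((k + h : ℕ) : ℂ) * ((2 * j + 1 : ℤ) : ℂ) / ((2 * h : ℕ) : ℂ) =
        2 * π * I * k * ((2 * j + 1 : ℤ) : ℂ) / ((2 * h : ℕ) : ℂ) + j * (2 * π * I) + π * I by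
      push_cast; field_simp; ring, exp_add_pi_mul_I, exp_add, exp_int_mul_two_pi_mul_I, mul_one]
  refine sum_involution (fun k _ => if k ≤ h then k + h else k - h) ?_ ?_ ?_ ?_
  · intro k hk
    split_ifs with hkh
    · rw [hterm, add_neg_cancel]
    · obtain ⟨k, rfl⟩ : ∃ k', k = k' + h := ⟨k - h, by omega⟩
      rw [Nat.add_sub_cancel, hterm, neg_add_cancel]
  · intro k hk _
    simp only [mem_filter, mem_Icc] at hk
    split_ifs <;> omega
  · intro k hk
    simp only [mem_filter, mem_Icc] at hk ⊢
    split_ifs with hkh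
    · exact ⟨by omega, (Nat.coprime_add_self_two_mul_iff hh).2 hk.2⟩
    · refine ⟨by omega, (Nat.coprime_add_self_two_mul_iff hh).1 ?_⟩
      rw [Nat.sub_add_cancel (by omega)]
      exact hk.2
  · intro k hk
    simp only [mem_filter, mem_Icc] at hk
    split_ifs <;> omega

lemma Finset.sum_range_two_mul_eq_zero_of_antiperiodic {M : Type*} [AddCommGroup M] {f : ℕ → M}
    {e : ℕ} (hf : Function.Antiperiodic f e) : ∑ ℓ ∈ range (2 * e), f ℓ = 0 := by
  simp [two_mul, sum_range_add, add_comm e, hf _]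

lemma sum_ramanujanSum_mul_pow_eq_zero {q e : ℕ} (hq : q ∣ 4 * e) {a : ℤ} (ha : Odd a) {ζ : ℂ}
    (hζ : ζ ^ e = -1) : ∑ ℓ ∈ range (2 * e), ramanujanSum q (2 * ℓ + a) * ζ ^ ℓ = 0 := by
  obtain ⟨r, hr⟩ := hq
  rcases Nat.even_or_odd r with ⟨s, rfl⟩ | hr_odd
  · refine sum_range_two_mul_eq_zero_of_antiperiodic fun ℓ => ?_
    have hr' : (4 * e : ℤ) = q * (s + s) := by exact_mod_cast hr
    have hs : (2 * ((ℓ + e : ℕ) : ℤ) + a) = 2 * ℓ + a + s * q := by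
      push_cast; linarith
    rw [hs, (ramanujanSum_periodic q).nat_mul s, pow_add, hζ, mul_neg_one, mul_neg]
  · have h4 : 4 ∣ q := (Nat.coprime_two_left.2 hr_odd).pow_left 2 |>.dvd_of_dvd_mul_right ⟨e, hr.symm⟩
    obtain ⟨m, rfl⟩ := h4
    refine sum_eq_zero fun ℓ _ => ?_
    rw [show 4 * m = 2 * (2 * m) by ring,
      ramanujanSum_two_mul_eq_zero (even_two_mul m) ((even_two_mul _).add_odd ha), zero_mul]

lemma sum_ramanujanSum_mul_exp_eq_zero {q d : ℕ} (hd : 2 ∣ d) (hq : q ∣ 2 * d) {a : ℤ}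
    (ha : Odd a) : ∑ ℓ ∈ range d, ramanujanSum q (2 * ℓ + a) * exp (-(2 * π * I * ℓ / d)) = 0 := by
  obtain ⟨e, rfl⟩ := hd
  rcases eq_or_ne e 0 with rfl | he
  · simp
  have he' : (e : ℂ) ≠ 0 := by exact_mod_cast he
  have hpow (ℓ : ℕ) : exp (-(2 * π * I * ℓ / (2 * e : ℕ))) = exp (-(2 * π * I / (2 * e : ℕ))) ^ ℓ := by
    rw [← exp_nat_mul]; ring_nf
  have hζ : exp (-(2 * π * I / (2 * e : ℕ))) ^ e = -1 := by
    rw [← exp_nat_mul, show (e : ℂ) * -(2 * π * I / (2 * e : ℕ)) = -(π * I) by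
      push_cast; field_simp, exp_neg_pi_mul_I]
  simp_rw [hpow]
  exact sum_ramanujanSum_mul_pow_eq_zero (by rwa [← mul_assoc] at hq) ha hζ

/-- `√d` times the value `Zx(1,1)` of the Zak transform. -/
noncomputable def zakOneOne (d : ℕ) : (Fin (2 * d) → ℂ) →ₗ[ℂ] ℂ :=
  ∑ ℓ : Fin d, exp (-(2 * π * I * ℓ / d)) • LinearMap.proj ⟨2 * ℓ + 1, by omega⟩

lemma zakOneOne_apply (d : ℕ) (x : Fin (2 * d) → ℂ) :
    zakOneOne d x = ∑ ℓ : Fin d, exp (-(2 * π * I * ℓ / d)) * x ⟨2 * ℓ + 1, by omega⟩ := by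
  simp [zakOneOne]

lemma zakOneOne_translate_ramanujanSum {q d : ℕ} (hd : 2 ∣ d) (hq : q ∣ 2 * d) (k : ℤ) :
    zakOneOne d (fun n => ramanujanSum q (n - 2 * k)) = 0 := by
  rw [zakOneOne_apply, Fin.sum_univ_eq_sum_range
    (fun ℓ => exp (-(2 * π * I * ℓ / d)) * ramanujanSum q ((2 * ℓ + 1 : ℕ) - 2 * k))]
  simpa [mul_comm, add_sub_assoc] using
    sum_ramanujanSum_mul_exp_eq_zero hd hq (a := 1 - 2 * k) (by simp [Int.odd_sub])

lemma zakOneOne_single_one {d : ℕ} (hd : 0 < d) :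
    zakOneOne d (Pi.single ⟨1, by omega⟩ 1) = 1 := by
  rw [zakOneOne_apply, Fintype.sum_eq_single ⟨0, hd⟩ fun ℓ hℓ => ?_]
  · simp
  · rw [Pi.single_eq_of_ne (by simpa [Fin.ext_iff] using hℓ), mul_zero]

theorem zak_one_one_vanishes_and_not_frame (d : ℕ) (hd : 0 < d) (h2 : 2 ∣ d) :
    (∀ q : ℕ, q ∣ 2 * d →
      ∑ ℓ ∈ Finset.range d,
        ramanujanSum q ((2 * ℓ + 1 : ℕ) : ℤ) *
          Complex.exp (-(2 * (Real.pi : ℂ) * Complex.I * (ℓ : ℂ) / (d : ℂ))) = 0) ∧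
    Submodule.span ℂ
      {v : Fin (2 * d) → ℂ | ∃ k < d, ∃ q ∈ (2 * d).divisors,
        v = fun n : Fin (2 * d) => ramanujanSum q (((n : ℕ) : ℤ) - 2 * (k : ℤ))} ≠ ⊤ := by
  refine ⟨fun q hq => by simpa using sum_ramanujanSum_mul_exp_eq_zero h2 hq odd_one, ?_⟩
  intro htop
  have hker : LinearMap.ker (zakOneOne d) = ⊤ := by
    refine top_le_iff.1 (htop ▸ Submodule.span_le.2 ?_)
    rintro _ ⟨k, -, q, hq, rfl⟩
    exact zakOneOne_translate_ramanujanSum h2 (Nat.dvd_of_mem_divisors hq) k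
  have := zakOneOne_single_one hd
  rw [LinearMap.ker_eq_top.1 hker] at this
  exact zero_ne_one this
end
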